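/- arXiv:2506.15448 — 3 statements merged into one kernel-verified Lean document; each statement's English description precedes it below -/
import Mathlib

section
/- (Theorem 1.) Assume the orthogonality-on-S assumption, set the one-class center c = 1, and let m ∈ Fin N with β m ≠ 0 and E m ≠ 0. If g : Fin N → ℝ is stationary in the m-th coordinate, i.e., Σ_{i ∈ S} (Σ_{j ∈ Fin N} g j * β j * u j i − 1) * β m * u m i = 0, then g m = s m / (β m * E m); i.e., the optimal adaptive filter response at frequency λ_m is g(λ_m) = (Σ_{i∈S} u_m(i)) / (β_m Σ_{i∈S} u_m(i)²). -/
/-- Theorem 1: with center `c = 1` and orthogonality on `S`, the optimal adaptive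
filter response at frequency `λ m` is
`g m = (∑ i ∈ S, u m i) / (β m * ∑ i ∈ S, (u m i)²)`. -/
theorem optimal_filter_closed_form (N : ℕ) (hN : 0 < N)
    (u : Fin N → Fin N → ℝ) (S : Finset (Fin N)) (β : Fin N → ℝ)
    (horth : ∀ m j : Fin N, m ≠ j → ∑ i ∈ S, u m i * u j i = 0)
    (m : Fin N) (hβ : β m ≠ 0) (hE : (∑ i ∈ S, (u m i) ^ 2) ≠ 0)
    (g : Fin N → ℝ)
    (hstat : ∑ i ∈ S, (∑ j : Fin N, g j * β j * u j i - 1) * β m * u m i = 0) :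
    g m = (∑ i ∈ S, u m i) / (β m * ∑ i ∈ S, (u m i) ^ 2) := by
  have key : g m * β m * β m * (∑ i ∈ S, (u m i) ^ 2)
      = β m * ∑ i ∈ S, u m i := by
    have h1 : ∑ i ∈ S, (∑ j : Fin N, g j * β j * u j i - 1) * β m * u m i
        = (∑ j : Fin N, g j * β j * β m * ∑ i ∈ S, u j i * u m i)
          - β m * ∑ i ∈ S, u m i := by
      have : ∀ i ∈ S, (∑ j : Fin N, g j * β j * u j i - 1) * β m * u m i
          = (∑ j : Fin N, g j * β j * β m * (u j i * u m i)) - β m * u m i := by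
        intro i _
        rw [sub_mul, sub_mul, one_mul, Finset.sum_mul, Finset.sum_mul]
        congr 1
        exact Finset.sum_congr rfl fun j _ => by ring
      rw [Finset.sum_congr rfl this, Finset.sum_sub_distrib, Finset.sum_comm,
        ← Finset.mul_sum]
      congr 1
      exact Finset.sum_congr rfl fun j _ => (Finset.mul_sum _ _ _).symm
    have h2 : (∑ j : Fin N, g j * β j * β m * ∑ i ∈ S, u j i * u m i)
        = g m * β m * β m * (∑ i ∈ S, (u m i) ^ 2) := by
      rw [Finset.sum_eq_single m]
      · rw [show (∑ i ∈ S, u m i * u m i) = ∑ i ∈ S, (u m i) ^ 2 from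
          Finset.sum_congr rfl fun i _ => (sq (u m i)).symm]
      · intro j _ hj
        rw [horth j m hj, mul_zero]
      · intro h; exact absurd (Finset.mem_univ m) h
    rw [h1, h2] at hstat
    linarith
  field_simp
  apply mul_left_cancel₀ hβ
  linear_combination key
end

section
/- Assume the orthogonality-on-S assumption and that for every m ∈ Fin N, β m ≠ 0 and E m > 0. Define the closed-form filter g* : Fin N → ℝ by g* m = c * s m / (β m * E m). Then g* is a global minimizer of the spectral one-class loss: for every g : Fin N → ℝ, L(g*) ≤ L(g). -/
lemma ocl_expand (N : ℕ) (u : Fin N → Fin N → ℝ) (S : Finset (Fin N)) (c : ℝ)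
    (horth : ∀ m j : Fin N, m ≠ j → ∑ i ∈ S, u m i * u j i = 0)
    (a : Fin N → ℝ) :
    ∑ i ∈ S, (∑ m : Fin N, a m * u m i - c) ^ 2
      = ∑ m : Fin N, (a m ^ 2 * (∑ i ∈ S, (u m i) ^ 2)
          - 2 * c * (a m * ∑ i ∈ S, u m i)) + S.card * c ^ 2 := by
  have h1 : ∀ i : Fin N, (∑ m : Fin N, a m * u m i - c) ^ 2
      = (∑ m : Fin N, ∑ j : Fin N, (a m * u m i) * (a j * u j i))
        - 2 * c * (∑ m : Fin N, a m * u m i) + c ^ 2 := by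
    intro i
    rw [sub_sq, ← Finset.sum_mul_sum]
    ring
  calc ∑ i ∈ S, (∑ m : Fin N, a m * u m i - c) ^ 2
      = ∑ i ∈ S, ((∑ m : Fin N, ∑ j : Fin N, (a m * u m i) * (a j * u j i))
          - 2 * c * (∑ m : Fin N, a m * u m i) + c ^ 2) := by
        exact Finset.sum_congr rfl fun i _ => h1 i
    _ = (∑ i ∈ S, ∑ m : Fin N, ∑ j : Fin N, (a m * u m i) * (a j * u j i))
          - 2 * c * (∑ i ∈ S, ∑ m : Fin N, a m * u m i) + S.card * c ^ 2 := by
        rw [Finset.sum_add_distrib, Finset.sum_sub_distrib, Finset.mul_sum,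
          Finset.sum_const, nsmul_eq_mul]
    _ = (∑ m : Fin N, ∑ j : Fin N, a m * a j * ∑ i ∈ S, u m i * u j i)
          - 2 * c * (∑ m : Fin N, a m * ∑ i ∈ S, u m i) + S.card * c ^ 2 := by
        have e1 : (∑ i ∈ S, ∑ m : Fin N, ∑ j : Fin N, (a m * u m i) * (a j * u j i))
            = ∑ m : Fin N, ∑ j : Fin N, a m * a j * ∑ i ∈ S, u m i * u j i := by
          rw [Finset.sum_comm]
          refine Finset.sum_congr rfl fun m _ => ?_
          rw [Finset.sum_comm]
          refine Finset.sum_congr rfl fun j _ => ?_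
          rw [Finset.mul_sum]
          refine Finset.sum_congr rfl fun i _ => ?_
          ring
        have e2 : (∑ i ∈ S, ∑ m : Fin N, a m * u m i)
            = ∑ m : Fin N, a m * ∑ i ∈ S, u m i := by
          rw [Finset.sum_comm]
          refine Finset.sum_congr rfl fun m _ => ?_
          rw [Finset.mul_sum]
        rw [e1, e2]
    _ = ∑ m : Fin N, (a m ^ 2 * (∑ i ∈ S, (u m i) ^ 2)
          - 2 * c * (a m * ∑ i ∈ S, u m i)) + S.card * c ^ 2 := by
        have e3 : (∑ m : Fin N, ∑ j : Fin N, a m * a j * ∑ i ∈ S, u m i * u j i)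
            = ∑ m : Fin N, a m ^ 2 * ∑ i ∈ S, (u m i) ^ 2 := by
          refine Finset.sum_congr rfl fun m _ => ?_
          rw [Finset.sum_eq_single m]
          · have h : ∑ i ∈ S, u m i * u m i = ∑ i ∈ S, (u m i) ^ 2 :=
              Finset.sum_congr rfl fun i _ => (sq (u m i)).symm
            rw [h]; ring
          · intro j _ hj
            rw [horth m j (Ne.symm hj), mul_zero]
          · intro h; exact absurd (Finset.mem_univ m) h
        rw [e3, Finset.mul_sum, ← Finset.sum_sub_distrib]

/-- Under orthogonality on `S`, the closed-form filter
`g* m = c * s m / (β m * E m)` is a global minimizer of the spectral one-class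
loss. -/
theorem closed_form_filter_is_global_minimizer (N : ℕ) (hN : 0 < N)
    (u : Fin N → Fin N → ℝ) (S : Finset (Fin N)) (β : Fin N → ℝ) (c : ℝ)
    (horth : ∀ m j : Fin N, m ≠ j → ∑ i ∈ S, u m i * u j i = 0)
    (hβ : ∀ m : Fin N, β m ≠ 0) (hE : ∀ m : Fin N, 0 < ∑ i ∈ S, (u m i) ^ 2) :
    ∀ g : Fin N → ℝ,
      ∑ i ∈ S, (∑ m : Fin N,
          (c * (∑ i ∈ S, u m i) / (β m * ∑ i ∈ S, (u m i) ^ 2)) * β m * u m i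
            - c) ^ 2
        ≤ ∑ i ∈ S, (∑ m : Fin N, g m * β m * u m i - c) ^ 2 := by
  intro g
  set a : Fin N → ℝ := fun m => g m * β m with ha
  set t : Fin N → ℝ := fun m =>
    c * (∑ i ∈ S, u m i) / (∑ i ∈ S, (u m i) ^ 2) with ht
  have hgstar : ∀ m i : Fin N,
      (c * (∑ i ∈ S, u m i) / (β m * ∑ i ∈ S, (u m i) ^ 2)) * β m * u m i
        = t m * u m i := by
    intro m i
    have hE' := (hE m).ne'
    rw [ht]
    field_simp [hβ m]
  have hg : ∀ m i : Fin N, g m * β m * u m i = a m * u m i := fun m i => rfl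
  have L1 : ∑ i ∈ S, (∑ m : Fin N,
      (c * (∑ i ∈ S, u m i) / (β m * ∑ i ∈ S, (u m i) ^ 2)) * β m * u m i
        - c) ^ 2
      = ∑ m : Fin N, (t m ^ 2 * (∑ i ∈ S, (u m i) ^ 2)
          - 2 * c * (t m * ∑ i ∈ S, u m i)) + S.card * c ^ 2 := by
    rw [← ocl_expand N u S c horth t]
    refine Finset.sum_congr rfl fun i _ => ?_
    congr 1
    congr 1
    exact Finset.sum_congr rfl fun m _ => hgstar m i
  have L2 : ∑ i ∈ S, (∑ m : Fin N, g m * β m * u m i - c) ^ 2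
      = ∑ m : Fin N, (a m ^ 2 * (∑ i ∈ S, (u m i) ^ 2)
          - 2 * c * (a m * ∑ i ∈ S, u m i)) + S.card * c ^ 2 := by
    rw [← ocl_expand N u S c horth a]
  rw [L1, L2]
  apply add_le_add_left
  apply Finset.sum_le_sum
  intro m _
  have hE' := (hE m).ne'
  have hts : c * ∑ i ∈ S, u m i = t m * (∑ i ∈ S, (u m i) ^ 2) := by
    rw [ht]; field_simp
  have key : a m ^ 2 * (∑ i ∈ S, (u m i) ^ 2)
      - 2 * c * (a m * ∑ i ∈ S, u m i)
      - (t m ^ 2 * (∑ i ∈ S, (u m i) ^ 2)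
          - 2 * c * (t m * ∑ i ∈ S, u m i))
      = (a m - t m) ^ 2 * (∑ i ∈ S, (u m i) ^ 2) := by
    have : 2 * c * (a m * ∑ i ∈ S, u m i)
        = 2 * a m * (t m * (∑ i ∈ S, (u m i) ^ 2)) := by
      rw [← hts]; ring
    rw [this]
    have : 2 * c * (t m * ∑ i ∈ S, u m i)
        = 2 * t m * (t m * (∑ i ∈ S, (u m i) ^ 2)) := by
      rw [← hts]; ring
    rw [this]
    ring
  linarith [key, mul_nonneg (sq_nonneg (a m - t m)) (hE m).le]
end

section
/- Assume the orthogonality-on-S assumption and that for every m ∈ Fin N, β m ≠ 0 and E m > 0. Define the closed-form filter g* : Fin N → ℝ by g* m = c * s m / (β m * E m). Then the minimum value of the spectral one-class loss is L(g*) = c ^ 2 * (S.card − Σ_{m ∈ Fin N} (s m) ^ 2 / E m). -/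
/-- Under orthogonality on `S`, the minimum value of the spectral one-class loss
attained by the closed-form filter `g* m = c * s m / (β m * E m)` is
`c² * (|S| − ∑ m, s m² / E m)`. -/
theorem closed_form_filter_min_value (N : ℕ) (hN : 0 < N)
    (u : Fin N → Fin N → ℝ) (S : Finset (Fin N)) (β : Fin N → ℝ) (c : ℝ)
    (horth : ∀ m j : Fin N, m ≠ j → ∑ i ∈ S, u m i * u j i = 0)
    (hβ : ∀ m : Fin N, β m ≠ 0) (hE : ∀ m : Fin N, 0 < ∑ i ∈ S, (u m i) ^ 2) :
    ∑ i ∈ S, (∑ m : Fin N,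
        (c * (∑ i ∈ S, u m i) / (β m * ∑ i ∈ S, (u m i) ^ 2)) * β m * u m i
          - c) ^ 2
      = c ^ 2 * ((S.card : ℝ)
          - ∑ m : Fin N, (∑ i ∈ S, u m i) ^ 2 / (∑ i ∈ S, (u m i) ^ 2)) := by
  set s : Fin N → ℝ := fun m => ∑ i ∈ S, u m i with hs
  set E : Fin N → ℝ := fun m => ∑ i ∈ S, (u m i) ^ 2 with hEdef
  have hE0 : ∀ m, E m ≠ 0 := fun m => (hE m).ne'
  set a : Fin N → ℝ := fun m => s m / E m with ha
  set T : Fin N → ℝ := fun i => ∑ m : Fin N, a m * u m i with hT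
  have step1 : ∀ i ∈ S,
      (∑ m : Fin N, (c * s m / (β m * E m)) * β m * u m i - c) ^ 2
        = c ^ 2 * (T i ^ 2 - 2 * T i + 1) := by
    intro i _
    have : ∀ m : Fin N, (c * s m / (β m * E m)) * β m * u m i
        = c * (a m * u m i) := by
      intro m
      have hb := hβ m
      have he := hE0 m
      field_simp [ha]
      rw [ha]; field_simp
    rw [Finset.sum_congr rfl fun m _ => this m, ← Finset.mul_sum,
      show (∑ m : Fin N, a m * u m i) = T i from rfl]
    ring
  rw [Finset.sum_congr rfl step1, ← Finset.mul_sum]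
  have hB : ∑ i ∈ S, T i = ∑ m : Fin N, s m ^ 2 / E m := by
    rw [hT, Finset.sum_comm]
    refine Finset.sum_congr rfl fun m _ => ?_
    rw [← Finset.mul_sum]
    show a m * s m = s m ^ 2 / E m
    rw [eq_div_iff (hE0 m), ha]
    field_simp [hE0 m]
  have hA : ∑ i ∈ S, T i ^ 2 = ∑ m : Fin N, s m ^ 2 / E m := by
    have hsq : ∀ i, T i ^ 2
        = ∑ m : Fin N, ∑ j : Fin N, a m * a j * (u m i * u j i) := by
      intro i
      rw [sq, hT, Finset.sum_mul_sum]
      exact Finset.sum_congr rfl fun m _ => Finset.sum_congr rfl fun j _ => by ring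
    simp only [hsq]
    rw [Finset.sum_comm]
    refine Finset.sum_congr rfl fun m _ => ?_
    rw [Finset.sum_comm]
    have : ∀ j : Fin N, ∑ i ∈ S, a m * a j * (u m i * u j i)
        = a m * a j * ∑ i ∈ S, u m i * u j i := by
      intro j; rw [Finset.mul_sum]
    rw [Finset.sum_congr rfl fun j _ => this j]
    rw [Finset.sum_eq_single m]
    · have : (∑ i ∈ S, u m i * u m i) = E m := by
        rw [hEdef]; exact Finset.sum_congr rfl fun i _ => (sq (u m i)).symm
      rw [this]
      show a m * a m * E m = s m ^ 2 / E m
      rw [eq_div_iff (hE0 m), ha]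
      field_simp [hE0 m]
    · intro j _ hj
      rw [horth m j (Ne.symm hj), mul_zero]
    · intro h; exact absurd (Finset.mem_univ m) h
  have hcard : ∑ i ∈ S, (1 : ℝ) = (S.card : ℝ) := by simp
  rw [Finset.sum_add_distrib, Finset.sum_sub_distrib, hA, ← Finset.mul_sum, hB, hcard]
  ring
end
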